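/- For every x > 0, P(Z ≤ −x) > 0 and P(Z ≥ x) > 0; that is, both tails of the limiting Quicksort distribution are strictly positive at every level. -/

import Mathlib

/-!
The toll `g` is continuous with `g (1/2) = 1 - 2 log 2 < 0`, so `g ≤ -c < 0` on a set `A` of
positive Lebesgue measure in `[0, 1]`. If `P(Z ≤ y) > 0`, then by independence the event
`U ∈ A, Z' ≤ y, Z'' ≤ y` has positive probability, and on it the convex combination
`U Z' + (1 - U) Z'' + g U` is at most `y - c`; as this has the law of `Z`, `P(Z ≤ y - c) > 0`.
Starting from any `y` with `P(Z ≤ y) > 0` and iterating gives the lower tail. The upper tail is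
the lower tail of `-Z`, which satisfies the same recursion with toll `-g`, negative near `0`
because `g 0 = 1`.
-/

open MeasureTheory ProbabilityTheory Real Set Filter Topology

lemma forall_of_monotone_of_sub {p : ℝ → Prop} (hp : Monotone p) {c : ℝ} (hc : 0 < c)
    (hstep : ∀ y, p y → p (y - c)) (hex : ∃ y, p y) (y : ℝ) : p y := by
  obtain ⟨y₀, hy₀⟩ := hex
  have hiter : ∀ n : ℕ, p (y₀ - n * c) := by
    intro n
    induction n with
    | zero => simpa using hy₀
    | succ n ih => simpa [add_mul, sub_add_eq_sub_sub] using hstep _ ih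
  obtain ⟨n, hn⟩ := exists_nat_ge ((y₀ - y) / c)
  rw [div_le_iff₀ hc] at hn
  exact hp (by linarith) (hiter n)

lemma exists_measure_le_ne_zero {Ω : Type*} [MeasurableSpace Ω] (μ : Measure Ω) [NeZero μ]
    (X : Ω → ℝ) : ∃ y, μ {ω | X ω ≤ y} ≠ 0 := by
  have hcover : (⋃ n : ℕ, {ω | X ω ≤ n}) = univ :=
    iUnion_eq_univ_iff.2 fun ω => exists_nat_ge (X ω)
  obtain ⟨n, hn⟩ := exists_measure_pos_of_not_measure_iUnion_null (μ := μ)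
    (by rw [hcover]; exact NeZero.ne _)
  exact ⟨n, hn.ne'⟩

lemma ProbabilityTheory.iIndepFun.measure_preimage_inter_three {Ω β : Type*}
    [MeasurableSpace Ω] [MeasurableSpace β] {μ : Measure Ω} {X Y W : Ω → β}
    (h : iIndepFun ![X, Y, W] μ) {s t r : Set β} (hs : MeasurableSet s)
    (ht : MeasurableSet t) (hr : MeasurableSet r) :
    μ (X ⁻¹' s ∩ Y ⁻¹' t ∩ W ⁻¹' r) = μ (X ⁻¹' s) * μ (Y ⁻¹' t) * μ (W ⁻¹' r) := by
  have hprod := h.measure_inter_preimage_eq_mul (S := Finset.univ) (sets := ![s, t, r])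
    (fun i _ => by fin_cases i <;> assumption)
  have hinter : (⋂ i ∈ Finset.univ, ![X, Y, W] i ⁻¹' ![s, t, r] i) =
      X ⁻¹' s ∩ Y ⁻¹' t ∩ W ⁻¹' r := by
    ext ω
    simp [Fin.forall_fin_succ, and_assoc]
  rwa [hinter, Fin.prod_univ_three] at hprod

lemma measure_preimage_inter_Icc_ne_zero {Ω : Type*} [MeasurableSpace Ω] {μ : Measure Ω}
    {U : Ω → ℝ} (hUm : Measurable U) (hU : μ.map U = volume.restrict (Icc 0 1)) {s : Set ℝ}
    (hs : IsOpen s) (hne : (s ∩ Ioo 0 1).Nonempty) : μ (U ⁻¹' (s ∩ Icc 0 1)) ≠ 0 := by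
  have hmeas : MeasurableSet (s ∩ Icc 0 1) := hs.measurableSet.inter measurableSet_Icc
  rw [← Measure.map_apply hUm hmeas, hU, Measure.restrict_apply hmeas, inter_assoc, inter_self]
  exact ((hs.inter isOpen_Ioo).measure_pos volume hne).trans_le
    (measure_mono (inter_subset_inter_right _ Ioo_subset_Icc_self)) |>.ne'

noncomputable def quicksortToll (u : ℝ) : ℝ := 2 * u * log u + 2 * (1 - u) * log (1 - u) + 1

lemma continuous_quicksortToll : Continuous quicksortToll := by
  have h : Continuous fun u : ℝ => 2 * (u * log u) + 2 * ((1 - u) * log (1 - u)) + 1 := by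
    fun_prop
  exact h.congr fun u => by simp only [quicksortToll]; ring

lemma quicksortToll_half : quicksortToll (1 / 2) = 1 - 2 * log 2 := by
  rw [quicksortToll, show (1 : ℝ) - 1 / 2 = 1 / 2 by norm_num, one_div, log_inv]
  ring

lemma exists_quicksortToll_neg : ∃ u ∈ Ioo (0 : ℝ) 1, quicksortToll u < 0 :=
  ⟨1 / 2, by norm_num, by linarith [quicksortToll_half, log_two_gt_d9]⟩

lemma exists_quicksortToll_pos : ∃ u ∈ Ioo (0 : ℝ) 1, 0 < quicksortToll u := by
  have hzero : quicksortToll 0 = 1 := by simp [quicksortToll]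
  have hnear : ∀ᶠ u in 𝓝 (0 : ℝ), 0 < quicksortToll u :=
    continuous_quicksortToll.continuousAt.eventually (lt_mem_nhds (by rw [hzero]; exact one_pos))
  have hright : ∀ᶠ u in 𝓝[>] (0 : ℝ), u ∈ Ioo 0 1 := Ioo_mem_nhdsGT zero_lt_one
  exact (hright.and (nhdsWithin_le_nhds hnear)).exists

section Recursion

variable {Ω : Type*} [MeasureSpace Ω] {Z Z' Z'' U : Ω → ℝ} {g : ℝ → ℝ}

lemma measure_le_sub_ne_zero_of_recursion {A : Set ℝ} {c y : ℝ} (hA : MeasurableSet A)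
    (hA01 : A ⊆ Icc 0 1) (hUA : ℙ (U ⁻¹' A) ≠ 0) (hgA : ∀ u ∈ A, g u ≤ -c)
    (hZ' : IdentDistrib Z' Z ℙ ℙ) (hZ'' : IdentDistrib Z'' Z ℙ ℙ)
    (hindep : iIndepFun ![U, Z', Z''] ℙ)
    (hrec : IdentDistrib Z (fun ω => U ω * Z' ω + (1 - U ω) * Z'' ω + g (U ω)) ℙ ℙ)
    (hy : ℙ {ω | Z ω ≤ y} ≠ 0) : ℙ {ω | Z ω ≤ y - c} ≠ 0 := by
  have hsub : U ⁻¹' A ∩ Z' ⁻¹' Iic y ∩ Z'' ⁻¹' Iic y ⊆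
      (fun ω => U ω * Z' ω + (1 - U ω) * Z'' ω + g (U ω)) ⁻¹' Iic (y - c) := by
    rintro ω ⟨⟨hUω, hZ'ω⟩, hZ''ω⟩
    obtain ⟨hU0, hU1⟩ := hA01 hUω
    have hgω := hgA _ hUω
    simp only [mem_preimage, mem_Iic] at hZ'ω hZ''ω ⊢
    nlinarith [mul_le_mul_of_nonneg_left hZ'ω hU0,
      mul_le_mul_of_nonneg_left hZ''ω (sub_nonneg.2 hU1)]
  have hjoint : ℙ (U ⁻¹' A ∩ Z' ⁻¹' Iic y ∩ Z'' ⁻¹' Iic y) ≠ 0 := by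
    rw [hindep.measure_preimage_inter_three hA measurableSet_Iic measurableSet_Iic,
      hZ'.measure_mem_eq measurableSet_Iic, hZ''.measure_mem_eq measurableSet_Iic]
    exact mul_ne_zero (mul_ne_zero hUA hy) hy
  change ℙ (Z ⁻¹' Iic (y - c)) ≠ 0
  rw [hrec.measure_mem_eq measurableSet_Iic]
  exact fun h => hjoint (measure_mono_null hsub h)

lemma measure_le_ne_zero_of_recursion [IsProbabilityMeasure (ℙ : Measure Ω)]
    (hUm : Measurable U)
    (hU : Measure.map U ℙ = volume.restrict (Icc (0 : ℝ) 1)) (hg : Continuous g)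
    (hneg : ∃ u ∈ Ioo (0 : ℝ) 1, g u < 0)
    (hZ' : IdentDistrib Z' Z ℙ ℙ) (hZ'' : IdentDistrib Z'' Z ℙ ℙ)
    (hindep : iIndepFun ![U, Z', Z''] ℙ)
    (hrec : IdentDistrib Z (fun ω => U ω * Z' ω + (1 - U ω) * Z'' ω + g (U ω)) ℙ ℙ)
    (y : ℝ) : ℙ {ω | Z ω ≤ y} ≠ 0 := by
  obtain ⟨u, hu, hgu⟩ := hneg
  obtain ⟨c, hc, hguc⟩ : ∃ c, 0 < c ∧ g u < -c := ⟨-g u / 2, by linarith, by linarith⟩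
  have hopen : IsOpen (g ⁻¹' Iio (-c)) := isOpen_Iio.preimage hg
  have hUA := measure_preimage_inter_Icc_ne_zero hUm hU hopen ⟨u, hguc, hu⟩
  have hmono : Monotone fun y => ℙ {ω | Z ω ≤ y} ≠ 0 := fun y y' hyy' hy h =>
    hy (measure_mono_null (fun ω (hω : Z ω ≤ y) => hω.trans hyy') h)
  exact forall_of_monotone_of_sub hmono hc
    (fun y => measure_le_sub_ne_zero_of_recursion (hopen.measurableSet.inter measurableSet_Icc)
      inter_subset_right hUA (fun v hv => le_of_lt hv.1) hZ' hZ'' hindep hrec)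
    (exists_measure_le_ne_zero ℙ Z) y

lemma measure_ge_ne_zero_of_recursion [IsProbabilityMeasure (ℙ : Measure Ω)]
    (hUm : Measurable U)
    (hU : Measure.map U ℙ = volume.restrict (Icc (0 : ℝ) 1)) (hg : Continuous g)
    (hpos : ∃ u ∈ Ioo (0 : ℝ) 1, 0 < g u)
    (hZ' : IdentDistrib Z' Z ℙ ℙ) (hZ'' : IdentDistrib Z'' Z ℙ ℙ)
    (hindep : iIndepFun ![U, Z', Z''] ℙ)
    (hrec : IdentDistrib Z (fun ω => U ω * Z' ω + (1 - U ω) * Z'' ω + g (U ω)) ℙ ℙ)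
    (y : ℝ) : ℙ {ω | y ≤ Z ω} ≠ 0 := by
  have hindep_neg : iIndepFun ![U, -Z', -Z''] ℙ := by
    convert hindep.comp ![id, Neg.neg, Neg.neg] fun i => by
      fin_cases i
      exacts [measurable_id, measurable_neg, measurable_neg] using 1
    ext i : 1
    fin_cases i <;> rfl
  have hrec_neg : IdentDistrib (-Z)
      (fun ω => U ω * (-Z') ω + (1 - U ω) * (-Z'') ω + (-g) (U ω)) ℙ ℙ := by
    have hfun : (fun ω => U ω * (-Z') ω + (1 - U ω) * (-Z'') ω + (-g) (U ω)) =
        Neg.neg ∘ fun ω => U ω * Z' ω + (1 - U ω) * Z'' ω + g (U ω) := by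
      funext ω
      simp only [Pi.neg_apply, Function.comp_apply]
      ring
    rw [hfun]
    exact hrec.comp measurable_neg
  obtain ⟨u, hu, hgu⟩ := hpos
  simpa using measure_le_ne_zero_of_recursion hUm hU hg.neg ⟨u, hu, neg_neg_of_pos hgu⟩
    (hZ'.comp measurable_neg) (hZ''.comp measurable_neg) hindep_neg hrec_neg (-y)

end Recursion

theorem quicksort_tails_positive_general
    {Ω : Type*} [MeasureSpace Ω] [IsProbabilityMeasure (ℙ : Measure Ω)]
    (Z Z' Z'' U : Ω → ℝ) (g : ℝ → ℝ)
    (hg : ∀ u : ℝ, g u = 2 * u * Real.log u + 2 * (1 - u) * Real.log (1 - u) + 1)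
    (hUm : Measurable U)
    (hZ' : IdentDistrib Z' Z ℙ ℙ) (hZ'' : IdentDistrib Z'' Z ℙ ℙ)
    (hU : Measure.map U ℙ = volume.restrict (Set.Icc (0 : ℝ) 1))
    (hindep : iIndepFun ![U, Z', Z''] ℙ)
    (hrec : IdentDistrib Z (fun ω => U ω * Z' ω + (1 - U ω) * Z'' ω + g (U ω)) ℙ ℙ) :
    ∀ x > (0 : ℝ), 0 < ℙ {ω | Z ω ≤ -x} ∧ 0 < ℙ {ω | x ≤ Z ω} := by
  obtain rfl : g = quicksortToll := funext hg
  intro x _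
  exact ⟨pos_iff_ne_zero.2 (measure_le_ne_zero_of_recursion hUm hU continuous_quicksortToll
      exists_quicksortToll_neg hZ' hZ'' hindep hrec _),
    pos_iff_ne_zero.2 (measure_ge_ne_zero_of_recursion hUm hU continuous_quicksortToll
      exists_quicksortToll_pos hZ' hZ'' hindep hrec _)⟩

/-- Both tails of the limiting Quicksort distribution are strictly
positive at every level: for every `x > 0`, `P(Z ≤ -x) > 0` and `P(Z ≥ x) > 0`. -/
theorem quicksort_tails_positive
    {Ω : Type*} [MeasureSpace Ω] [IsProbabilityMeasure (ℙ : Measure Ω)]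
    (Z Z' Z'' U : Ω → ℝ) (g : ℝ → ℝ)
    (hg : ∀ u : ℝ, g u = 2 * u * Real.log u + 2 * (1 - u) * Real.log (1 - u) + 1)
    (hZm : Measurable Z) (hZ'm : Measurable Z') (hZ''m : Measurable Z'')
    (hUm : Measurable U)
    (hZ' : IdentDistrib Z' Z ℙ ℙ) (hZ'' : IdentDistrib Z'' Z ℙ ℙ)
    (hU : Measure.map U ℙ = volume.restrict (Set.Icc (0 : ℝ) 1))
    (hindep : iIndepFun ![U, Z', Z''] ℙ)
    (hrec : IdentDistrib Z (fun ω => U ω * Z' ω + (1 - U ω) * Z'' ω + g (U ω)) ℙ ℙ)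
    (hmean : ∫ ω, Z ω ∂ℙ = 0)
    (hmgf : ∀ t : ℝ, Integrable (fun ω => Real.exp (t * Z ω)) ℙ) :
    ∀ x > (0 : ℝ), 0 < ℙ {ω | Z ω ≤ -x} ∧ 0 < ℙ {ω | x ≤ Z ω} :=
  quicksort_tails_positive_general Z Z' Z'' U g hg hUm hZ' hZ'' hU hindep hrec
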